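/- arXiv:math/0702723 — 4 statements merged into one kernel-verified Lean document; each statement's English description precedes it below -/
import Mathlib

section
/- Let G be a graph with at least one edge, A its adjacency matrix, and L = D − A its Laplacian, where D is the diagonal degree matrix. Then χ(G) ≥ 1 + μ(A)/(μ(L) − μ(A)), where μ denotes the largest eigenvalue. -/
open Matrix SimpleGraph

noncomputable def maxEigR {n : ℕ} (A : Matrix (Fin n) (Fin n) ℝ) : ℝ :=
  sSup (spectrum ℝ A)

/-!
Let `x` be a unit eigenvector of `A` for `μ(A)` and split it along the colour classes of a proper
`k`-colouring, `x = ∑ xᵢ`. The matrix `M = μ(L)•1 - L = (μ(L)•1 - D) + A` is positive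
semidefinite, so expanding `∑ᵢ (x - k xᵢ)ᵀ M (x - k xᵢ) ≥ 0` gives `xᵀ M x ≤ k ∑ᵢ xᵢᵀ M xᵢ`.
Colour classes are independent, so `A` contributes nothing on the right, and the inequality reads
`μ(L) - xᵀDx + μ(A) ≤ k (μ(L) - xᵀDx)`. Since `xᵀDx - μ(A) = xᵀLx ≥ 0`, this yields
`μ(A) ≤ (k - 1)(μ(L) - μ(A))`, and `μ(A) > 0` because `A` is a nonzero matrix of trace zero.
-/

namespace Matrix

variable {n : ℕ} {A : Matrix (Fin n) (Fin n) ℝ}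

lemma le_maxEigR_of_mem_spectrum {r : ℝ} (hr : r ∈ spectrum ℝ A) : r ≤ maxEigR A :=
  le_csSup (finite_real_spectrum (A := A)).bddAbove hr

namespace IsHermitian

lemma eigenvalues_le_maxEigR (hA : A.IsHermitian) (i : Fin n) : hA.eigenvalues i ≤ maxEigR A :=
  le_maxEigR_of_mem_spectrum (hA.eigenvalues_mem_spectrum_real i)

lemma exists_eigenvalues_eq_maxEigR [NeZero n] (hA : A.IsHermitian) :
    ∃ i, hA.eigenvalues i = maxEigR A := by
  have hrange := hA.spectrum_real_eq_range_eigenvalues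
  have : maxEigR A ∈ spectrum ℝ A := Set.Nonempty.csSup_mem
    (hrange ▸ Set.range_nonempty _) finite_real_spectrum
  rwa [hrange] at this

open scoped MatrixOrder in
lemma posSemidef_maxEigR_smul_one_sub (hA : A.IsHermitian) :
    (maxEigR A • 1 - A).PosSemidef := by
  have : A ≤ algebraMap ℝ _ (maxEigR A) :=
    le_algebraMap_of_spectrum_le (fun _ hr => le_maxEigR_of_mem_spectrum hr) hA
  rwa [Algebra.algebraMap_eq_smul_one, Matrix.le_iff] at this

lemma exists_mulVec_eq_maxEigR_smul [NeZero n] (hA : A.IsHermitian) :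
    ∃ x : Fin n → ℝ, x ⬝ᵥ x = 1 ∧ A *ᵥ x = maxEigR A • x := by
  obtain ⟨i, hi⟩ := hA.exists_eigenvalues_eq_maxEigR
  refine ⟨hA.eigenvectorBasis i, ?_, by rw [hA.mulVec_eigenvectorBasis, hi]⟩
  have h := real_inner_self_eq_norm_sq (hA.eigenvectorBasis i)
  rw [hA.eigenvectorBasis.orthonormal.1 i, EuclideanSpace.inner_eq_star_dotProduct] at h
  simpa [dotProduct_comm] using h

lemma maxEigR_pos_of_trace_eq_zero (hA : A.IsHermitian) (htr : A.trace = 0) (hA0 : A ≠ 0) :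
    0 < maxEigR A := by
  by_contra! hle
  have hsum : ∑ i, hA.eigenvalues i = 0 := by
    simpa [htr] using hA.trace_eq_sum_eigenvalues.symm
  have hzero : hA.eigenvalues = 0 := funext fun i =>
    (Finset.sum_eq_zero_iff_of_nonpos fun j _ => (hA.eigenvalues_le_maxEigR j).trans hle).mp hsum i
      (Finset.mem_univ i)
  exact hA0 (hA.eigenvalues_eq_zero_iff.mp hzero)

end IsHermitian

lemma PosSemidef.dotProduct_mulVec_sum_le {V ι : Type*} [Fintype V] [Fintype ι]
    {M : Matrix V V ℝ} (hM : M.PosSemidef) (y : ι → V → ℝ) :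
    (∑ i, y i) ⬝ᵥ M *ᵥ ∑ i, y i ≤ Fintype.card ι * ∑ i, y i ⬝ᵥ M *ᵥ y i := by
  set x := ∑ i, y i
  set k : ℝ := (Fintype.card ι : ℝ)
  have hexpand : ∑ i, (x - k • y i) ⬝ᵥ M *ᵥ (x - k • y i)
      = k * (k * ∑ i, y i ⬝ᵥ M *ᵥ y i) - k * (x ⬝ᵥ M *ᵥ x) := by
    have hleft : ∑ i, x ⬝ᵥ M *ᵥ y i = x ⬝ᵥ M *ᵥ x := by rw [← dotProduct_sum, ← mulVec_sum]
    have hright : ∑ i, y i ⬝ᵥ M *ᵥ x = x ⬝ᵥ M *ᵥ x := by rw [← sum_dotProduct]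
    simp only [mulVec_sub, mulVec_smul, dotProduct_sub, sub_dotProduct, dotProduct_smul,
      smul_dotProduct, smul_eq_mul, Finset.sum_sub_distrib, ← Finset.mul_sum, hleft, hright,
      Finset.sum_const, Finset.card_univ, nsmul_eq_mul]
    ring
  have hnonneg : 0 ≤ k * (k * ∑ i, y i ⬝ᵥ M *ᵥ y i - x ⬝ᵥ M *ᵥ x) := by
    rw [mul_sub, ← hexpand]
    exact Finset.sum_nonneg fun i _ => by simpa using hM.dotProduct_mulVec_nonneg (x - k • y i)
  rcases isEmpty_or_nonempty ι with hι | hι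
  · simp [x]
  · have hk : 0 < k := Nat.cast_pos.mpr Fintype.card_pos
    linarith [nonneg_of_mul_nonneg_right hnonneg hk]

end Matrix

namespace SimpleGraph

lemma Coloring.dotProduct_mulVec_le_card_mul {V ι : Type*} [Fintype V] [DecidableEq V]
    [Fintype ι] {G : SimpleGraph V} [DecidableRel G.Adj] (C : G.Coloring ι) {d : V → ℝ}
    (hM : (diagonal d + G.adjMatrix ℝ).PosSemidef) (x : V → ℝ) :
    x ⬝ᵥ (diagonal d + G.adjMatrix ℝ) *ᵥ x ≤ Fintype.card ι * (x ⬝ᵥ diagonal d *ᵥ x) := by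
  classical
  set y : ι → V → ℝ := fun i v => if C v = i then x v else 0
  have hsum : ∑ i, y i = x := by
    ext v
    simp [y, Finset.sum_apply]
  have hdiag : ∑ i, y i ⬝ᵥ diagonal d *ᵥ y i = x ⬝ᵥ diagonal d *ᵥ x := by
    simp only [dotProduct, mulVec_diagonal, y]
    rw [Finset.sum_comm]
    refine Finset.sum_congr rfl fun v _ => ?_
    simp [apply_ite]
  have hadj : ∀ i, y i ⬝ᵥ G.adjMatrix ℝ *ᵥ y i = 0 := by
    intro i
    rw [dotProduct_mulVec_adjMatrix]
    refine Finset.sum_eq_zero fun v _ => Finset.sum_eq_zero fun w _ => ?_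
    by_cases hvw : G.Adj v w
    · have : ¬ (C v = i ∧ C w = i) := fun h => C.valid hvw (h.1.trans h.2.symm)
      simp only [y, hvw, if_true]
      split_ifs <;> simp_all
    · simp [hvw]
  calc x ⬝ᵥ (diagonal d + G.adjMatrix ℝ) *ᵥ x
      ≤ Fintype.card ι * ∑ i, y i ⬝ᵥ (diagonal d + G.adjMatrix ℝ) *ᵥ y i :=
        hsum ▸ hM.dotProduct_mulVec_sum_le y
    _ = Fintype.card ι * (x ⬝ᵥ diagonal d *ᵥ x) := by
        simp only [add_mulVec, dotProduct_add, hadj, add_zero, hdiag]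

lemma Colorable.maxEigR_adjMatrix_le {n k : ℕ} [NeZero n] {G : SimpleGraph (Fin n)}
    [DecidableRel G.Adj] (hk : G.Colorable k) :
    maxEigR (G.adjMatrix ℝ) ≤
      (k - 1) * (maxEigR (G.lapMatrix ℝ) - maxEigR (G.adjMatrix ℝ)) := by
  obtain ⟨C⟩ := hk
  set μA := maxEigR (G.adjMatrix ℝ)
  set μL := maxEigR (G.lapMatrix ℝ)
  obtain ⟨x, hxx, hAx⟩ := (G.isHermitian_adjMatrix ℝ).exists_mulVec_eq_maxEigR_smul
  have hxAx : x ⬝ᵥ G.adjMatrix ℝ *ᵥ x = μA := by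
    rw [hAx, dotProduct_smul, hxx, smul_eq_mul, mul_one]
  set d : Fin n → ℝ := fun v => μL - G.degree v
  have hd : diagonal d = μL • 1 - G.degMatrix ℝ := by
    ext v w
    by_cases hvw : v = w <;> simp [d, degMatrix, one_apply, hvw]
  have hM : diagonal d + G.adjMatrix ℝ = μL • 1 - G.lapMatrix ℝ := by
    rw [hd, lapMatrix]; abel
  have hcol := C.dotProduct_mulVec_le_card_mul
    (hM ▸ (G.isHermitian_lapMatrix ℝ).posSemidef_maxEigR_smul_one_sub) x
  have hxdx : x ⬝ᵥ diagonal d *ᵥ x = μL - x ⬝ᵥ G.degMatrix ℝ *ᵥ x := by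
    rw [hd, sub_mulVec, smul_mulVec, one_mulVec, dotProduct_sub, dotProduct_smul, hxx,
      smul_eq_mul, mul_one]
  have hLx : μA ≤ x ⬝ᵥ G.degMatrix ℝ *ᵥ x := by
    have := (posSemidef_lapMatrix ℝ G).dotProduct_mulVec_nonneg x
    simp only [star_trivial, lapMatrix, sub_mulVec, dotProduct_sub, hxAx] at this
    linarith
  have hk : (1 : ℝ) ≤ k := by exact_mod_cast (C 0).pos
  rw [add_mulVec, dotProduct_add, hxAx, hxdx, Fintype.card_fin] at hcol
  calc μA ≤ (k - 1) * (μL - x ⬝ᵥ G.degMatrix ℝ *ᵥ x) := by linarith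
    _ ≤ (k - 1) * (μL - μA) := mul_le_mul_of_nonneg_left (by linarith) (by linarith)

end SimpleGraph

/-- `χ(G) ≥ 1 + μ(A)/(μ(L) − μ(A))` for a graph with an edge, stated via
`k`-colorability for every `k`. -/
theorem stmt7 {n : ℕ} (G : SimpleGraph (Fin n)) [DecidableRel G.Adj]
    (hedge : ∃ u v, G.Adj u v) :
    ∀ k : ℕ, G.Colorable k →
      (k : ℝ) ≥ 1 + maxEigR (G.adjMatrix ℝ) /
        (maxEigR (G.lapMatrix ℝ) - maxEigR (G.adjMatrix ℝ)) := by
  intro k hk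
  obtain ⟨u, v, huv⟩ := hedge
  have : NeZero n := NeZero.of_pos u.pos
  have hA : G.adjMatrix ℝ ≠ 0 := fun h => by simpa [huv] using congr_fun₂ h u v
  have hμA := (G.isHermitian_adjMatrix ℝ).maxEigR_pos_of_trace_eq_zero
    (G.trace_adjMatrix (α := ℝ)) hA
  have hbound := hk.maxEigR_adjMatrix_le
  have hk1 : (1 : ℝ) ≤ k := by obtain ⟨C⟩ := hk; exact_mod_cast (C u).pos
  have hgap : 0 < maxEigR (G.lapMatrix ℝ) - maxEigR (G.adjMatrix ℝ) :=
    pos_of_mul_pos_right (hμA.trans_le hbound) (sub_nonneg.mpr hk1)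
  rw [ge_iff_le, ← le_sub_iff_add_le', div_le_iff₀ hgap]
  exact hbound
end

section
/- Let G be a nonempty r-chromatic graph with adjacency matrix A. Then μ_min(A) ≤ −μ(A)/(r−1), where μ(A) is the largest and μ_min(A) the smallest eigenvalue of A. -/
/-!
Let `x` be an eigenvector for the largest eigenvalue `μ` of `A`, `x_c` its restriction to the
colour class `c`, and `r` the number of colours. Since `A` vanishes on each colour class, the test
vectors `x - r x_c` satisfy `∑_c ‖x - r x_c‖² = r (r - 1) ‖x‖²` and
`∑_c ⟪x - r x_c, A (x - r x_c)⟫ = -r ⟪x, A x⟫ = -r μ ‖x‖²`; summing the Rayleigh bound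
`μ_min ‖w‖² ≤ ⟪w, A w⟫` over these vectors gives `μ_min (r - 1) ≤ -μ`.
-/

open Matrix SimpleGraph

noncomputable def minEigR {n : ℕ} (A : Matrix (Fin n) (Fin n) ℝ) : ℝ :=
  sInf (spectrum ℝ A)

open scoped MatrixOrder

namespace Matrix

section ColorClasses

variable {ι κ R : Type*} [CommRing R] (C : ι → κ) (x : ι → R)

lemma sum_indicator_preimage_singleton [Fintype κ] : ∑ c, (C ⁻¹' {c}).indicator x = x := by
  classical
  ext v
  simp [Finset.sum_apply, Set.indicator_apply]

variable [Fintype ι]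

lemma indicator_dotProduct_mulVec_indicator_eq_zero {A : Matrix ι ι R} {s : Set ι}
    (hs : ∀ u ∈ s, ∀ v ∈ s, A u v = 0) : s.indicator x ⬝ᵥ A *ᵥ s.indicator x = 0 := by
  classical
  refine Finset.sum_eq_zero fun u _ ↦ ?_
  by_cases hu : u ∈ s
  · refine mul_eq_zero_of_right _ (Finset.sum_eq_zero fun v _ ↦ ?_)
    by_cases hv : v ∈ s
    · exact mul_eq_zero_of_left (hs u hu v hv) _
    · rw [Set.indicator_of_notMem hv, mul_zero]
  · rw [Set.indicator_of_notMem hu, zero_mul]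

variable [Fintype κ]

lemma sum_indicator_dotProduct_self :
    ∑ c, (C ⁻¹' {c}).indicator x ⬝ᵥ (C ⁻¹' {c}).indicator x = x ⬝ᵥ x := by
  classical
  simp only [dotProduct, Set.indicator_apply, Set.mem_preimage, Set.mem_singleton_iff, ite_mul,
    mul_ite, mul_zero]
  rw [Finset.sum_comm]
  simp

lemma sum_dotProduct_mulVec_sub_card_smul_indicator (A : Matrix ι ι R) :
    ∑ c, (x - Fintype.card κ • (C ⁻¹' {c}).indicator x) ⬝ᵥ
        A *ᵥ (x - Fintype.card κ • (C ⁻¹' {c}).indicator x) =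
      Fintype.card κ ^ 2 • ∑ c, (C ⁻¹' {c}).indicator x ⬝ᵥ A *ᵥ (C ⁻¹' {c}).indicator x -
        Fintype.card κ • (x ⬝ᵥ A *ᵥ x) := by
  simp only [mulVec_sub, mulVec_smul, sub_dotProduct, dotProduct_sub, smul_dotProduct,
    dotProduct_smul, Finset.sum_sub_distrib, ← Finset.smul_sum, ← dotProduct_sum, ← sum_dotProduct,
    ← mulVec_sum, Finset.sum_const, Finset.card_univ, sum_indicator_preimage_singleton]
  module

lemma sum_dotProduct_self_sub_card_smul_indicator :
    ∑ c, (x - Fintype.card κ • (C ⁻¹' {c}).indicator x) ⬝ᵥ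
        (x - Fintype.card κ • (C ⁻¹' {c}).indicator x) =
      (Fintype.card κ ^ 2 - Fintype.card κ : R) * (x ⬝ᵥ x) := by
  classical
  simpa [sum_indicator_dotProduct_self, sub_mul, nsmul_eq_mul] using
    sum_dotProduct_mulVec_sub_card_smul_indicator C x 1

end ColorClasses

lemma exists_mulVec_eq_smul_of_mem_spectrum {ι K : Type*} [Fintype ι] [DecidableEq ι] [Field K]
    {A : Matrix ι ι K} {μ : K} (hμ : μ ∈ spectrum K A) : ∃ v ≠ 0, A *ᵥ v = μ • v := by
  rw [← spectrum_toLin', ← Module.End.hasEigenvalue_iff_mem_spectrum] at hμ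
  obtain ⟨v, hv, hv0⟩ := hμ.exists_hasEigenvector
  exact ⟨v, hv0, by simpa using Module.End.mem_eigenspace_iff.mp hv⟩

namespace IsHermitian

variable {ι : Type*} [Fintype ι] [DecidableEq ι] {A : Matrix ι ι ℝ} (hA : A.IsHermitian)
include hA

lemma finite_spectrum_real : (spectrum ℝ A).Finite :=
  hA.spectrum_real_eq_range_eigenvalues ▸ Set.finite_range _

lemma sSup_spectrum_real_mem [Nonempty ι] : sSup (spectrum ℝ A) ∈ spectrum ℝ A :=
  (hA.spectrum_real_eq_range_eigenvalues ▸ Set.range_nonempty _ : (spectrum ℝ A).Nonempty).csSup_mem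
    hA.finite_spectrum_real

lemma sInf_spectrum_real_mul_dotProduct_self_le (y : ι → ℝ) :
    sInf (spectrum ℝ A) * (y ⬝ᵥ y) ≤ y ⬝ᵥ A *ᵥ y := by
  have hpsd : (A - algebraMap ℝ _ (sInf (spectrum ℝ A))).PosSemidef :=
    (algebraMap_le_iff_le_spectrum hA.isSelfAdjoint).mpr fun _ ↦
      csInf_le hA.finite_spectrum_real.bddBelow
  have := hpsd.dotProduct_mulVec_nonneg y
  simp only [star_trivial, Algebra.algebraMap_eq_smul_one, sub_mulVec, smul_mulVec, one_mulVec,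
    dotProduct_sub, dotProduct_smul, smul_eq_mul] at this
  linarith

lemma sInf_spectrum_real_mul_card_sub_one_le {κ : Type*} [Fintype κ] [Nonempty ι] (C : ι → κ)
    (hC : ∀ u v, C u = C v → A u v = 0) :
    sInf (spectrum ℝ A) * (Fintype.card κ - 1) ≤ -sSup (spectrum ℝ A) := by
  obtain ⟨x, hx0, hx⟩ := exists_mulVec_eq_smul_of_mem_spectrum hA.sSup_spectrum_real_mem
  have hr : (0 : ℝ) < Fintype.card κ :=
    Nat.cast_pos.mpr (Fintype.card_pos_iff.mpr ⟨C (Classical.arbitrary ι)⟩)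
  have hs : 0 < x ⬝ᵥ x := by simpa using dotProduct_self_star_pos_iff.mpr hx0
  have hclass c : (C ⁻¹' {c}).indicator x ⬝ᵥ A *ᵥ (C ⁻¹' {c}).indicator x = 0 :=
    indicator_dotProduct_mulVec_indicator_eq_zero x fun u hu v hv ↦ hC u v (hu.trans hv.symm)
  have hsum := Finset.sum_le_sum fun c (_ : c ∈ Finset.univ) ↦
    hA.sInf_spectrum_real_mul_dotProduct_self_le (x - Fintype.card κ • (C ⁻¹' {c}).indicator x)
  rw [← Finset.mul_sum, sum_dotProduct_self_sub_card_smul_indicator,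
    sum_dotProduct_mulVec_sub_card_smul_indicator, hx] at hsum
  simp only [hclass, Finset.sum_const_zero, smul_zero, zero_sub, dotProduct_smul, smul_eq_mul,
    nsmul_eq_mul] at hsum
  nlinarith [mul_pos hr hs]

end IsHermitian

end Matrix

/-- For a nonempty `r`-chromatic graph, `μ_min(A) ≤ −μ(A)/(r−1)`. -/
theorem stmt10 {n r : ℕ} (G : SimpleGraph (Fin n)) [DecidableRel G.Adj]
    (hedge : ∃ u v, G.Adj u v) (hr : 2 ≤ r) (hχ : G.chromaticNumber = (r : ℕ∞)) :
    minEigR (G.adjMatrix ℝ) ≤ - maxEigR (G.adjMatrix ℝ) / ((r : ℝ) - 1) := by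
  obtain ⟨u, -, -⟩ := hedge
  have : Nonempty (Fin n) := ⟨u⟩
  obtain ⟨C⟩ := chromaticNumber_le_iff_colorable.mp hχ.le
  have hr₁ : (0 : ℝ) < r - 1 := by
    have : (2 : ℝ) ≤ r := by exact_mod_cast hr
    linarith
  rw [minEigR, maxEigR, le_div_iff₀ hr₁]
  simpa using (G.isHermitian_adjMatrix ℝ).sInf_spectrum_real_mul_card_sub_one_le C
    fun u v huv ↦ by rw [adjMatrix_apply, if_neg fun hadj ↦ C.valid hadj huv]
end

section
/- Let G be a connected graph with at least one edge, adjacency matrix A, and Laplacian L. If χ(G) = 1 + μ(A)/(μ(L) − μ(A)), then G is regular. -/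
/-!
Fix an `r`-colouring of `G` and any vector `x`. Restrict `x` to the colour classes and centre
the pieces: `z t = x|_{class t} - x / r`. Colour classes are independent sets, so
`∑ zₜᵀ L zₜ = xᵀ D x - xᵀ L x / r` while `∑ ‖zₜ‖² = (1 - 1/r) ‖x‖²`; bounding each `zₜᵀ L zₜ`
by `μ(L) ‖zₜ‖²` gives `(r - 1) xᵀ D x + xᵀ A x ≤ (r - 1) μ(L) ‖x‖²`. For `x` a top eigenvector
of `A`, the hypothesis `(r - 1) μ(L) = r μ(A)` turns this into `xᵀ L x ≤ 0`. Hence `xᵀ L x = 0`,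
so `x` is constant on the connected graph, and `A x = μ(A) x` makes every degree equal `μ(A)`.
-/

open Matrix SimpleGraph

theorem sub_one_mul_eq_of_eq_one_add_div {r a l : ℝ} (hr : r ≠ 1) (h : r = 1 + a / (l - a)) :
    (r - 1) * l = r * a := by
  have hne : l - a ≠ 0 := fun hla => hr (by rwa [hla, div_zero, add_zero] at h)
  field_simp at h
  linarith

section MaxEig

variable {n : ℕ} {M : Matrix (Fin n) (Fin n) ℝ}

theorem Matrix.IsHermitian.dotProduct_mulVec_le_maxEigR (hM : M.IsHermitian) (x : Fin n → ℝ) :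
    x ⬝ᵥ (M *ᵥ x) ≤ maxEigR M * (x ⬝ᵥ x) := by
  have hpsd : (algebraMap ℝ (Matrix (Fin n) (Fin n) ℝ) (maxEigR M) - M).PosSemidef := by
    refine posSemidef_iff_isHermitian_and_spectrum_nonneg.mpr ⟨?_, ?_⟩
    · rw [algebraMap_eq_diagonal]
      exact (isHermitian_diagonal _).sub hM
    · rw [← spectrum.singleton_sub_eq]
      rintro _ ⟨_, rfl, μ, hμ, rfl⟩
      exact sub_nonneg.mpr (le_csSup M.finite_spectrum.bddAbove hμ)
  have := hpsd.dotProduct_mulVec_nonneg x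
  simpa [sub_mulVec, Algebra.algebraMap_eq_smul_one, smul_mulVec, mul_comm] using this

theorem Matrix.IsHermitian.exists_mulVec_eq_maxEigR_smul_s12 [Nonempty (Fin n)] (hM : M.IsHermitian) :
    ∃ x, x ≠ 0 ∧ M *ᵥ x = maxEigR M • x := by
  obtain ⟨i, hi⟩ : maxEigR M ∈ Set.range hM.eigenvalues := by
    rw [← hM.spectrum_real_eq_range_eigenvalues]
    exact (hM.spectrum_real_eq_range_eigenvalues ▸ Set.range_nonempty _).csSup_mem
      M.finite_spectrum
  refine ⟨hM.eigenvectorBasis i, ?_, hi ▸ hM.mulVec_eigenvectorBasis i⟩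
  exact fun h => hM.eigenvectorBasis.orthonormal.ne_zero i (WithLp.ofLp_injective 2 h)

end MaxEig

theorem Matrix.sum_dotProduct_mulVec_sub_mean {ι V R : Type*} [Fintype ι] [Fintype V] [Field R]
    (M : Matrix V V R) (y : ι → V → R) :
    ∑ t, (y t - (Fintype.card ι : R)⁻¹ • ∑ s, y s) ⬝ᵥ
        (M *ᵥ (y t - (Fintype.card ι : R)⁻¹ • ∑ s, y s)) =
      ∑ t, y t ⬝ᵥ (M *ᵥ y t) - (Fintype.card ι : R)⁻¹ * ((∑ s, y s) ⬝ᵥ (M *ᵥ ∑ s, y s)) := by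
  set N : R := (Fintype.card ι : R)
  set x := ∑ s, y s
  simp only [mulVec_sub, sub_dotProduct, dotProduct_sub, mulVec_smul, smul_dotProduct,
    dotProduct_smul, smul_eq_mul, Finset.sum_sub_distrib]
  rw [← Finset.mul_sum, ← Finset.mul_sum, Finset.sum_sub_distrib, ← sum_dotProduct,
    ← dotProduct_sum, ← mulVec_sum, Finset.sum_const, Finset.card_univ, nsmul_eq_mul]
  have hN : N * N⁻¹ * N⁻¹ = N⁻¹ := by
    rcases eq_or_ne N 0 with h | h
    · simp [h]
    · field_simp
  linear_combination (x ⬝ᵥ (M *ᵥ x)) * hN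

section FiberRestrict

variable {V α R : Type*} [DecidableEq α]

def restrictFiber [Zero R] (c : V → α) (x : V → R) (t : α) : V → R :=
  fun v => if c v = t then x v else 0

variable [Fintype α] [CommSemiring R]

theorem sum_restrictFiber (c : V → α) (x : V → R) : ∑ t, restrictFiber c x t = x := by
  ext v
  simp [restrictFiber, Finset.sum_apply]

theorem sum_restrictFiber_dotProduct_diagonal_mulVec [Fintype V] [DecidableEq V] (c : V → α)
    (x w : V → R) :
    ∑ t, restrictFiber c x t ⬝ᵥ (diagonal w *ᵥ restrictFiber c x t) = x ⬝ᵥ (diagonal w *ᵥ x) := by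
  simp only [dotProduct, mulVec_diagonal, restrictFiber]
  rw [Finset.sum_comm]
  refine Finset.sum_congr rfl fun v _ => ?_
  simp [ite_mul, mul_ite]

end FiberRestrict

theorem SimpleGraph.Coloring.restrictFiber_dotProduct_adjMatrix_mulVec {V α R : Type*}
    [Fintype V] [DecidableEq α] [NonAssocSemiring R] {G : SimpleGraph V} [DecidableRel G.Adj]
    (C : G.Coloring α) (x : V → R) (t : α) :
    restrictFiber C x t ⬝ᵥ (G.adjMatrix R *ᵥ restrictFiber C x t) = 0 := by
  rw [dotProduct_mulVec_adjMatrix]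
  refine Finset.sum_eq_zero fun u _ => Finset.sum_eq_zero fun v _ => ?_
  by_cases huv : G.Adj u v
  · have hne := C.valid huv
    simp only [restrictFiber, huv, if_true]
    split_ifs <;> simp_all
  · simp [huv]

theorem SimpleGraph.Coloring.dotProduct_degMatrix_adjMatrix_le_maxEigR {n : ℕ}
    {G : SimpleGraph (Fin n)} [DecidableRel G.Adj] {α : Type*} [Fintype α] [DecidableEq α]
    (C : G.Coloring α) (x : Fin n → ℝ) :
    ((Fintype.card α : ℝ) - 1) * (x ⬝ᵥ (G.degMatrix ℝ *ᵥ x)) + x ⬝ᵥ (G.adjMatrix ℝ *ᵥ x) ≤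
      ((Fintype.card α : ℝ) - 1) * maxEigR (G.lapMatrix ℝ) * (x ⬝ᵥ x) := by
  rcases isEmpty_or_nonempty α with hα | hα
  · have : IsEmpty (Fin n) := ⟨fun v => hα.false (C v)⟩
    simp [dotProduct]
  have hquad := sum_dotProduct_mulVec_sub_mean (G.lapMatrix ℝ) (restrictFiber C x)
  have hnorm := sum_dotProduct_mulVec_sub_mean 1 (restrictFiber C x)
  simp only [sum_restrictFiber, one_mulVec] at hquad hnorm
  have hfiber_lap : ∑ t, restrictFiber C x t ⬝ᵥ (G.lapMatrix ℝ *ᵥ restrictFiber C x t) =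
      x ⬝ᵥ (G.degMatrix ℝ *ᵥ x) := by
    simp only [lapMatrix, sub_mulVec, dotProduct_sub, C.restrictFiber_dotProduct_adjMatrix_mulVec,
      sub_zero, degMatrix, sum_restrictFiber_dotProduct_diagonal_mulVec]
  have hfiber_norm : ∑ t, restrictFiber C x t ⬝ᵥ restrictFiber C x t = x ⬝ᵥ x := by
    simpa only [diagonal_one, one_mulVec] using
      sum_restrictFiber_dotProduct_diagonal_mulVec (C : Fin n → α) x fun _ => 1
  have hle := Finset.sum_le_sum fun t (_ : t ∈ Finset.univ) =>
    (G.isHermitian_lapMatrix ℝ).dotProduct_mulVec_le_maxEigR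
      (restrictFiber C x t - (Fintype.card α : ℝ)⁻¹ • x)
  rw [← Finset.mul_sum, hquad, hnorm, hfiber_lap, hfiber_norm] at hle
  have hLx : x ⬝ᵥ (G.lapMatrix ℝ *ᵥ x) =
      x ⬝ᵥ (G.degMatrix ℝ *ᵥ x) - x ⬝ᵥ (G.adjMatrix ℝ *ᵥ x) := by
    rw [lapMatrix, sub_mulVec, dotProduct_sub]
  have hN : (Fintype.card α : ℝ) * (Fintype.card α : ℝ)⁻¹ = 1 := mul_inv_cancel₀ (by simp)
  have := mul_le_mul_of_nonneg_left hle (Nat.cast_nonneg (Fintype.card α))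
  rw [hLx] at this
  linear_combination this + (x ⬝ᵥ (G.degMatrix ℝ *ᵥ x) - x ⬝ᵥ (G.adjMatrix ℝ *ᵥ x) -
    maxEigR (G.lapMatrix ℝ) * (x ⬝ᵥ x)) * hN

theorem SimpleGraph.Connected.exists_isRegularOfDegree_of_dotProduct_lapMatrix_mulVec_eq_zero
    {V : Type*} [Fintype V] [DecidableEq V] {G : SimpleGraph V} [DecidableRel G.Adj]
    (hG : G.Connected) {x : V → ℝ} (hx : x ≠ 0) {μ : ℝ} (hAx : G.adjMatrix ℝ *ᵥ x = μ • x)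
    (hLx : x ⬝ᵥ (G.lapMatrix ℝ *ᵥ x) = 0) : ∃ d, G.IsRegularOfDegree d := by
  obtain ⟨w, hw⟩ := Function.ne_iff.mp hx
  have hconst : x = Function.const V (x w) := by
    funext v
    exact (lapMatrix_toLinearMap₂'_apply'_eq_zero_iff_forall_reachable G x).mp
      (by rwa [toLinearMap₂'_apply']) v w (hG v w)
  have hdeg : ∀ v, (G.degree v : ℝ) = μ := fun v => by
    have := congrFun hAx v
    rw [hconst, adjMatrix_mulVec_const_apply] at this
    exact mul_right_cancel₀ hw this
  exact ⟨G.degree w, fun v => by exact_mod_cast (hdeg v).trans (hdeg w).symm⟩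

/-- If equality holds in the bound `χ(G) ≥ 1 + μ(A)/(μ(L) − μ(A))` for a
connected graph with an edge, then `G` is regular. -/
theorem stmt12 {n r : ℕ} (G : SimpleGraph (Fin n)) [DecidableRel G.Adj]
    (hconn : G.Connected) (hedge : ∃ u v, G.Adj u v)
    (hχ : G.chromaticNumber = (r : ℕ∞))
    (heq : (r : ℝ) = 1 + maxEigR (G.adjMatrix ℝ) /
      (maxEigR (G.lapMatrix ℝ) - maxEigR (G.adjMatrix ℝ))) :
    ∃ d : ℕ, G.IsRegularOfDegree d := by
  obtain ⟨u, v, huv⟩ := hedge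
  have : Nonempty (Fin n) := ⟨u⟩
  have hr : (2 : ℝ) ≤ r := by
    have := hχ ▸ two_le_chromaticNumber_of_adj huv
    exact_mod_cast this
  have hla := sub_one_mul_eq_of_eq_one_add_div (by linarith) heq
  obtain ⟨C⟩ : G.Colorable r := chromaticNumber_le_iff_colorable.mp hχ.le
  obtain ⟨x, hx, hAx⟩ := (G.isHermitian_adjMatrix ℝ).exists_mulVec_eq_maxEigR_smul_s12
  have hbound := C.dotProduct_degMatrix_adjMatrix_le_maxEigR x
  rw [Fintype.card_fin, hAx, dotProduct_smul, smul_eq_mul] at hbound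
  have hLx : x ⬝ᵥ (G.lapMatrix ℝ *ᵥ x) =
      x ⬝ᵥ (G.degMatrix ℝ *ᵥ x) - maxEigR (G.adjMatrix ℝ) * (x ⬝ᵥ x) := by
    rw [lapMatrix, sub_mulVec, dotProduct_sub, hAx, dotProduct_smul, smul_eq_mul]
  have hLx_nonpos : ((r : ℝ) - 1) * (x ⬝ᵥ (G.lapMatrix ℝ *ᵥ x)) ≤ 0 := by
    linear_combination hbound + (x ⬝ᵥ x) * hla + ((r : ℝ) - 1) * hLx
  have hLx_nonneg := (posSemidef_lapMatrix ℝ G).dotProduct_mulVec_nonneg x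
  rw [star_trivial] at hLx_nonneg
  refine hconn.exists_isRegularOfDegree_of_dotProduct_lapMatrix_mulVec_eq_zero hx hAx ?_
  exact le_antisymm (nonpos_of_mul_nonpos_right hLx_nonpos (by linarith)) hLx_nonneg
end

section
/- Let G be a k-regular graph on n vertices with at least one edge, with smallest adjacency eigenvalue −τ. If α(G) = nτ/(k+τ) and χ(G) = n/α(G), then in any proper χ(G)-coloring with all classes of size α(G), every two color classes induce a τ-regular bipartite subgraph. -/
open Matrix SimpleGraph

/-!
Since every eigenvalue of the adjacency matrix `A` is at least `-τ`, the matrix `B = τ • 1 + A` is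
positive semidefinite. For an independent set `S` with `|S| (k + τ) = n τ` (equality in Hoffman's
bound), the centred indicator `z = 1_S - (|S| / n) • 1` satisfies `zᵀ B z = 0`, hence `B z = 0`.
The coordinate of `B z` at a vertex `v ∉ S` is `d_S(v) - (|S| / n) (k + τ)`, so `v` has exactly `τ`
neighbours in `S`. Colour classes of the given colouring are such sets.
-/

open Finset

variable {V : Type*} [Fintype V]

namespace SimpleGraph

variable (G : SimpleGraph V) [DecidableRel G.Adj]

lemma adjMatrix_mulVec_one_of_isRegularOfDegree {k : ℕ} (hreg : G.IsRegularOfDegree k) :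
    G.adjMatrix ℝ *ᵥ 1 = (k : ℝ) • 1 := by
  ext v
  simpa using adjMatrix_mulVec_const_apply_of_regular (a := (1 : ℝ)) hreg (v := v)

lemma one_dotProduct_adjMatrix_mulVec {k : ℕ} (hreg : G.IsRegularOfDegree k) (x : V → ℝ) :
    1 ⬝ᵥ G.adjMatrix ℝ *ᵥ x = k * (1 ⬝ᵥ x) := by
  rw [dotProduct_mulVec, ← mulVec_transpose, transpose_adjMatrix,
    G.adjMatrix_mulVec_one_of_isRegularOfDegree hreg, smul_dotProduct, smul_eq_mul]

end SimpleGraph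

variable [DecidableEq V]

lemma posSemidef_algebraMap_add_of_forall_le {A : Matrix V V ℝ}
    (hA : A.IsHermitian) {τ : ℝ} (h : ∀ μ ∈ spectrum ℝ A, -τ ≤ μ) :
    (algebraMap ℝ (Matrix V V ℝ) τ + A).PosSemidef := by
  refine posSemidef_iff_isHermitian_and_spectrum_nonneg.mpr ⟨(isHermitian_diagonal _).add hA, ?_⟩
  intro μ hμ
  rw [← sub_add_cancel μ τ, spectrum.add_mem_add_iff] at hμ
  show 0 ≤ μ
  linarith [h _ hμ]

def indicatorVec (S : Finset V) : V → ℝ := fun w => if w ∈ S then 1 else 0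

lemma indicatorVec_dotProduct_self (S : Finset V) : indicatorVec S ⬝ᵥ indicatorVec S = #S := by
  simp [indicatorVec, dotProduct]

lemma one_dotProduct_indicatorVec (S : Finset V) : 1 ⬝ᵥ indicatorVec S = #S := by
  simp [indicatorVec, dotProduct]

lemma indicatorVec_dotProduct_one (S : Finset V) : indicatorVec S ⬝ᵥ 1 = #S := by
  simp [indicatorVec, dotProduct]

namespace SimpleGraph

variable (G : SimpleGraph V) [DecidableRel G.Adj]

lemma adjMatrix_mulVec_indicatorVec_apply (S : Finset V) (v : V) :
    (G.adjMatrix ℝ *ᵥ indicatorVec S) v = #{w ∈ S | G.Adj v w} := by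
  simp only [adjMatrix_mulVec_apply, indicatorVec, sum_boole, neighborFinset_eq_filter,
    filter_filter]
  norm_cast
  congr 1
  ext w
  simp [and_comm]

lemma IsIndepSet.indicatorVec_dotProduct_adjMatrix_mulVec {S : Finset V} (hS : G.IsIndepSet S) :
    indicatorVec S ⬝ᵥ G.adjMatrix ℝ *ᵥ indicatorVec S = 0 := by
  rw [dotProduct_mulVec_adjMatrix]
  refine sum_eq_zero fun i _ => sum_eq_zero fun j _ => ?_
  by_cases hij : G.Adj i j
  · have : ¬ (i ∈ S ∧ j ∈ S) := fun h => hS h.1 h.2 hij.ne hij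
    simp [indicatorVec, hij]
    tauto
  · simp [hij]

variable {G}

lemma IsIndepSet.dotProduct_mulVec_indicatorVec_sub_smul_one {k : ℕ} (hreg : G.IsRegularOfDegree k)
    {S : Finset V} (hS : G.IsIndepSet S) (τ c : ℝ) :
    (indicatorVec S - c • 1) ⬝ᵥ (algebraMap ℝ (Matrix V V ℝ) τ + G.adjMatrix ℝ) *ᵥ
        (indicatorVec S - c • 1) =
      τ * (#S - 2 * c * #S + c ^ 2 * Fintype.card V) + k * c * (c * Fintype.card V - 2 * #S) := by
  simp only [add_mulVec, Algebra.algebraMap_eq_smul_one, smul_mulVec, one_mulVec, mulVec_sub,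
    mulVec_smul, dotProduct_add, dotProduct_sub, sub_dotProduct, dotProduct_smul, smul_dotProduct,
    smul_eq_mul, hS.indicatorVec_dotProduct_adjMatrix_mulVec, one_dotProduct_adjMatrix_mulVec G hreg,
    G.adjMatrix_mulVec_one_of_isRegularOfDegree hreg, indicatorVec_dotProduct_self,
    indicatorVec_dotProduct_one, one_dotProduct_indicatorVec, one_dotProduct_one]
  ring

lemma IsIndepSet.mulVec_indicatorVec_sub_smul_one_eq_zero [Nonempty V] {k : ℕ} {τ : ℝ}
    (hreg : G.IsRegularOfDegree k) (hspec : ∀ μ ∈ spectrum ℝ (G.adjMatrix ℝ), -τ ≤ μ)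
    {S : Finset V} (hS : G.IsIndepSet S) (hcard : (#S : ℝ) * (k + τ) = Fintype.card V * τ) :
    (algebraMap ℝ (Matrix V V ℝ) τ + G.adjMatrix ℝ) *ᵥ
      (indicatorVec S - (#S / Fintype.card V : ℝ) • 1) = 0 := by
  have hB := posSemidef_algebraMap_add_of_forall_le (isHermitian_adjMatrix ℝ G) hspec
  refine (hB.dotProduct_mulVec_zero_iff _).mp ?_
  have hn : (Fintype.card V : ℝ) ≠ 0 := by positivity
  rw [star_trivial, hS.dotProduct_mulVec_indicatorVec_sub_smul_one hreg]
  field_simp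
  linear_combination (-#S : ℝ) * hcard

theorem IsIndepSet.card_filter_adj_eq {k : ℕ} {τ : ℝ}
    (hreg : G.IsRegularOfDegree k) (hspec : ∀ μ ∈ spectrum ℝ (G.adjMatrix ℝ), -τ ≤ μ)
    {S : Finset V} (hS : G.IsIndepSet S) (hcard : (#S : ℝ) * (k + τ) = Fintype.card V * τ)
    {v : V} (hv : v ∉ S) : (#{w ∈ S | G.Adj v w} : ℝ) = τ := by
  have : Nonempty V := ⟨v⟩
  have hn : (Fintype.card V : ℝ) ≠ 0 := by positivity
  have hzero := congrFun (hS.mulVec_indicatorVec_sub_smul_one_eq_zero hreg hspec hcard) v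
  simp only [add_mulVec, Algebra.algebraMap_eq_smul_one, smul_mulVec, one_mulVec, mulVec_sub,
    mulVec_smul, G.adjMatrix_mulVec_one_of_isRegularOfDegree hreg, Pi.add_apply, Pi.sub_apply,
    Pi.smul_apply, G.adjMatrix_mulVec_indicatorVec_apply, indicatorVec, if_neg hv, Pi.one_apply,
    Pi.zero_apply, smul_eq_mul] at hzero
  calc (#{w ∈ S | G.Adj v w} : ℝ) = #S * (k + τ) / Fintype.card V := by
        linear_combination hzero
    _ = τ := by rw [hcard]; field_simp

end SimpleGraph

lemma minEigR_le {n : ℕ} {A : Matrix (Fin n) (Fin n) ℝ} {μ : ℝ} (hμ : μ ∈ spectrum ℝ A) :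
    minEigR A ≤ μ :=
  csInf_le A.finite_spectrum.bddBelow hμ

theorem stmt19_general {n k r α : ℕ} (G : SimpleGraph (Fin n)) [DecidableRel G.Adj]
    (hreg : G.IsRegularOfDegree k)
    (τ : ℝ) (hτ : minEigR (G.adjMatrix ℝ) = -τ) (hτpos : 0 < τ)
    (hαval : (α : ℝ) = (n : ℝ) * τ / ((k : ℝ) + τ))
    (C : G.Coloring (Fin r))
    (hsizes : ∀ c : Fin r, (Finset.univ.filter fun v => C v = c).card = α) :
    ∀ c c' : Fin r, c ≠ c' → ∀ v : Fin n, C v = c →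
      ((Finset.univ.filter fun w => C w = c' ∧ G.Adj v w).card : ℝ) = τ := by
  intro c c' hcc' v hv
  have hkτ : (k : ℝ) + τ ≠ 0 := by positivity
  have hspec : ∀ μ ∈ spectrum ℝ (G.adjMatrix ℝ), -τ ≤ μ := fun μ hμ => hτ ▸ minEigR_le hμ
  have hindep : G.IsIndepSet ({w | C w = c'} : Finset (Fin n)) := by
    intro u hu w hw _ huw
    simp only [coe_filter, mem_univ, true_and, Set.mem_ofPred_eq] at hu hw
    exact C.valid huw (hu.trans hw.symm)
  have hcard : ((#{w | C w = c'} : ℕ) : ℝ) * (k + τ) = Fintype.card (Fin n) * τ := by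
    rw [hsizes, hαval, Fintype.card_fin]
    field_simp
  have hvS : v ∉ ({w | C w = c'} : Finset (Fin n)) := by simpa [hv] using hcc'
  rw [← hindep.card_filter_adj_eq hreg hspec hcard hvS, filter_filter]

/-- Equality case in Hoffman's ratio bound: for a `k`-regular graph with
`α(G) = nτ/(k+τ)` and `χ(G) = n/α(G)`, in any proper `χ(G)`-coloring whose
classes all have size `α(G)`, every two color classes induce a `τ`-regular
bipartite subgraph. -/
theorem stmt19 {n k r α : ℕ} (G : SimpleGraph (Fin n)) [DecidableRel G.Adj]
    (hedge : ∃ u v, G.Adj u v) (hreg : G.IsRegularOfDegree k)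
    (τ : ℝ) (hτ : minEigR (G.adjMatrix ℝ) = -τ) (hτpos : 0 < τ)
    (hα : ∀ s : Finset (Fin n), (∀ u ∈ s, ∀ v ∈ s, ¬ G.Adj u v) → s.card ≤ α)
    (hαex : ∃ s : Finset (Fin n), (∀ u ∈ s, ∀ v ∈ s, ¬ G.Adj u v) ∧ s.card = α)
    (hαval : (α : ℝ) = (n : ℝ) * τ / ((k : ℝ) + τ))
    (hχ : G.chromaticNumber = (r : ℕ∞)) (hrα : r * α = n)
    (C : G.Coloring (Fin r))
    (hsizes : ∀ c : Fin r, (Finset.univ.filter fun v => C v = c).card = α) :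
    ∀ c c' : Fin r, c ≠ c' → ∀ v : Fin n, C v = c →
      ((Finset.univ.filter fun w => C w = c' ∧ G.Adj v w).card : ℝ) = τ :=
  stmt19_general G hreg τ hτ hτpos hαval C hsizes
end
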